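/- If a finitely generated R-module M lies in ΩDeep(R) ∩ DF(R), then M has a free direct summand. -/

import Mathlib

/-!
Let `t = depth R` and `0 → R → Mⁿ → X → 0`, `0 → M → Rᵐ → Y → 0` be the given sequences. If `M`
has no free summand, every functional `M → R` takes values in `𝔪`. Since `Ext^i(k, X)` and
`Ext^i(k, Y)` vanish for `i < t`, the long exact `Ext(k, -)` sequences make
`Ext^t(k, R) → Ext^t(k, Mⁿ)` and `Ext^t(k, M) → Ext^t(k, Rᵐ)` injective, so a nonzero class of
`Ext^t(k, R)` survives along `R → Mⁿ → M → Rᵐ` for a suitable coordinate projection `Mⁿ → M`.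
That composite has all entries in `𝔪`, which annihilates `Ext(k, -)`, so the class is zero.
Hence `Ext^i(k, R) = 0` for all `i ≤ t`, and Rees's theorem gives an `R`-regular sequence of
length `t + 1`, contradicting `depth R = t` (the supremum defining `depth R` is attained because
`depth R ≤ dim R < ∞`).
-/

universe u

open IsLocalRing

noncomputable def rdepth (R : Type u) [CommRing R] [IsLocalRing R]
    (M : Type u) [AddCommGroup M] [Module R M] : ℕ :=
  sSup {n : ℕ | ∃ rs : List R, rs.length = n ∧ (∀ r ∈ rs, r ∈ maximalIdeal R) ∧
    RingTheory.Sequence.IsRegular M rs}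

def Deep (R : Type u) [CommRing R] [IsLocalRing R]
    (M : Type u) [AddCommGroup M] [Module R M] : Prop :=
  Module.Finite R M ∧ rdepth R R ≤ rdepth R M

def OmegaDeep (R : Type u) [CommRing R] [IsLocalRing R]
    (M : Type u) [AddCommGroup M] [Module R M] : Prop :=
  ∃ (n : ℕ) (f : M →ₗ[R] (Fin n → R)), Function.Injective f ∧
    Deep R ((Fin n → R) ⧸ LinearMap.range f)

def DF (R : Type u) [CommRing R] [IsLocalRing R]
    (M : Type u) [AddCommGroup M] [Module R M] : Prop :=
  ∃ (n : ℕ) (f : R →ₗ[R] (Fin n → M)), Function.Injective f ∧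
    Deep R ((Fin n → M) ⧸ LinearMap.range f)

def HasFreeSummand (R : Type u) [CommRing R] (M : Type u) [AddCommGroup M] [Module R M] : Prop :=
  ∃ (p : M →ₗ[R] R) (s : R →ₗ[R] M), p.comp s = LinearMap.id

noncomputable def mu (R : Type u) [CommRing R] (M : Type u) [AddCommGroup M] [Module R M] : ℕ :=
  sInf {n : ℕ | ∃ s : Fin n → M, Submodule.span R (Set.range s) = ⊤}

abbrev ExtVanishes (R : Type u) [CommRing R] (M N : Type u) [AddCommGroup M] [Module R M]
    [AddCommGroup N] [Module R N] (i : ℕ) : Prop :=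
  Subsingleton (((Ext R (ModuleCat.{u} R) i).obj
    (Opposite.op (ModuleCat.of R M))).obj (ModuleCat.of R N))


open CategoryTheory RingTheory

namespace CategoryTheory.Abelian.Ext

variable {R : Type u} [CommRing R] {X : ModuleCat.{u} R}

lemma postcomp_mk₀_injective_of_injective {A B : Type u} [AddCommGroup A] [Module R A]
    [AddCommGroup B] [Module R B] {f : A →ₗ[R] B} (hf : Function.Injective f) {n : ℕ}
    (hC : ∀ j < n, Subsingleton (Ext X (ModuleCat.of R (B ⧸ LinearMap.range f)) j)) :
    Function.Injective ((mk₀ (ModuleCat.ofHom f)).postcomp X (add_zero n)) := by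
  have hS := ModuleCat.shortComplex_shortExact
    (ModuleCat.shortComplexOfCompEqZero f (LinearMap.range f).mkQ
      (LinearMap.exact_map_mkQ_range f).linearMap_comp_eq_zero)
    (LinearMap.exact_map_mkQ_range f) hf (Submodule.mkQ_surjective _)
  rcases n with _ | j
  · have : Mono (ModuleCat.ofHom f) := (ModuleCat.mono_iff_injective _).mpr hf
    exact postcomp_mk₀_injective_of_mono X _
  rw [injective_iff_map_eq_zero]
  intro x hx
  obtain ⟨y, rfl⟩ := covariant_sequence_exact₁ X hS x hx rfl
  rw [show y = 0 from @Subsingleton.elim _ (hC j j.lt_succ_self) y 0, zero_comp]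

lemma smul_eq_zero_of_mem_annihilator {Y : ModuleCat.{u} R} {n : ℕ} {r : R}
    (hr : r ∈ Module.annihilator R X) (x : Ext X Y n) : r • x = 0 := by
  rw [smul_eq_comp_mk₀]
  exact congr($(postcomp_smul_id_eq_zero_of_mem_annihilator hr n) x)

lemma comp_mk₀_eq_zero_of_mem_smul_top {I : Ideal R} (hI : I ≤ Module.annihilator R X)
    {W V : Type u} [AddCommGroup W] [Module R W] [AddCommGroup V] [Module R V]
    {φ : W →ₗ[R] V} (hφ : φ ∈ I • (⊤ : Submodule R (W →ₗ[R] V))) {n : ℕ}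
    (x : Ext X (ModuleCat.of R W) n) : x.comp (mk₀ (ModuleCat.ofHom φ)) (add_zero n) = 0 := by
  refine Submodule.smul_induction_on (p := fun φ => x.comp (mk₀ (ModuleCat.ofHom φ)) _ = 0) hφ
    (fun r hr ψ _ => ?_) (fun ψ χ hψ hχ => ?_)
  · rw [show ModuleCat.ofHom (r • ψ) = r • ModuleCat.ofHom ψ from rfl, mk₀_smul, comp_smul,
      smul_eq_zero_of_mem_annihilator (hI hr)]
  · rw [ModuleCat.ofHom_add, mk₀_add, comp_add, hψ, hχ, add_zero]

lemma exists_comp_mk₀_proj_ne_zero {ι : Type} [Fintype ι] [DecidableEq ι] {Y : Type u}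
    [AddCommGroup Y] [Module R Y] {n : ℕ} {x : Ext X (ModuleCat.of R (ι → Y)) n} (hx : x ≠ 0) :
    ∃ i, x.comp (mk₀ (ModuleCat.ofHom (LinearMap.proj i))) (add_zero n) ≠ 0 := by
  contrapose! hx
  have hid : 𝟙 (ModuleCat.of R (ι → Y)) = ∑ i, ModuleCat.ofHom (LinearMap.proj i) ≫
      ModuleCat.ofHom (LinearMap.single R (fun _ => Y) i) := by
    ext y i
    simp
  rw [← comp_mk₀_id x, hid, mk₀_sum, comp_sum]
  refine Finset.sum_eq_zero fun i _ => ?_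
  rw [← mk₀_comp_mk₀, ← comp_assoc_of_third_deg_zero, hx i, zero_comp]

end CategoryTheory.Abelian.Ext

/-- `depth N ≥ n`, in the `Ext` form of Rees's theorem. -/
def DepthGE (R : Type u) [CommRing R] [IsLocalRing R]
    (N : Type u) [AddCommGroup N] [Module R N] (n : ℕ) : Prop :=
  ∀ i < n, Subsingleton (Abelian.Ext (ModuleCat.of R (R ⧸ maximalIdeal R)) (ModuleCat.of R N) i)

section Depth

variable {R : Type u} [CommRing R] [IsLocalRing R] {N : Type u} [AddCommGroup N] [Module R N]

lemma DepthGE.mono {m n : ℕ} (h : DepthGE R N m) (hnm : n ≤ m) : DepthGE R N n :=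
  fun i hi => h i (hi.trans_le hnm)

lemma support_quotient_maximalIdeal :
    Module.support R (R ⧸ maximalIdeal R) = PrimeSpectrum.zeroLocus (maximalIdeal R) := by
  rw [Module.support_eq_zeroLocus, Ideal.annihilator_quotient]

lemma maximalIdeal_smul_top_lt_top [Module.Finite R N] [Nontrivial N] :
    maximalIdeal R • (⊤ : Submodule R N) < ⊤ :=
  (Submodule.top_ne_ideal_smul_of_le_jacobson_annihilator
    (maximalIdeal_le_jacobson _)).symm.lt_top

variable [IsNoetherianRing R] [Module.Finite R N]

lemma depthGE_of_isRegular {rs : List R} (hrs : ∀ r ∈ rs, r ∈ maximalIdeal R)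
    (h : Sequence.IsRegular N rs) : DepthGE R N rs.length :=
  have := h.nontrivial
  ModuleCat.subsingleton_ext_of_exists_isRegular _ (.of R (R ⧸ maximalIdeal R))
    support_quotient_maximalIdeal.subset (.of R N) maximalIdeal_smul_top_lt_top rs hrs h

lemma DepthGE.exists_isRegular [Nontrivial N] {n : ℕ} (h : DepthGE R N n) :
    ∃ rs : List R, rs.length = n ∧ (∀ r ∈ rs, r ∈ maximalIdeal R) ∧ Sequence.IsRegular N rs :=
  ModuleCat.exists_isRegular_of_exists_subsingleton_ext _ n (.of R N)
    maximalIdeal_smul_top_lt_top (.of R (R ⧸ maximalIdeal R)) support_quotient_maximalIdeal h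

lemma depthGE_of_le_rdepth {n : ℕ} (h : n ≤ rdepth R N) : DepthGE R N n := by
  rcases Nat.eq_zero_or_pos n with rfl | hn
  · exact fun i hi => absurd hi (Nat.not_lt_zero i)
  obtain ⟨k, ⟨rs, rfl, hrs, hreg⟩, hk⟩ : ∃ k ∈ {k : ℕ | ∃ rs : List R, rs.length = k ∧
      (∀ r ∈ rs, r ∈ maximalIdeal R) ∧ Sequence.IsRegular N rs}, n ≤ k := by
    by_contra! hlt
    have := h.trans (csSup_le' fun k hk => Nat.le_sub_one_of_lt (hlt k hk))
    omega
  exact (depthGE_of_isRegular hrs hreg).mono hk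

end Depth

section DepthLeDim

variable {R : Type u} [CommRing R] [IsLocalRing R] [IsNoetherianRing R]

lemma RingTheory.Sequence.IsRegular.length_le_ringKrullDim {rs : List R}
    (h : Sequence.IsRegular R rs) : (rs.length : WithBot ℕ∞) ≤ ringKrullDim R := by
  have : Nontrivial (R ⧸ Ideal.ofList rs) :=
    Ideal.Quotient.nontrivial_iff.mpr fun htop => h.top_ne_smul (by simp [htop])
  rw [← ringKrullDim_add_length_eq_ringKrullDim_of_isRegular rs h]
  exact le_add_of_nonneg_left ringKrullDim_nonneg_of_nontrivial

lemma bddAbove_length_isRegular_self : BddAbove {n : ℕ | ∃ rs : List R, rs.length = n ∧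
    (∀ r ∈ rs, r ∈ maximalIdeal R) ∧ Sequence.IsRegular R rs} := by
  obtain ⟨e, he⟩ := WithBot.ne_bot_iff_exists.mp (ringKrullDim_ne_bot (R := R))
  obtain ⟨d, rfl⟩ := (ENat.ne_top_iff_exists (n := e)).mp
    (by rintro rfl; exact ringKrullDim_ne_top he.symm)
  refine ⟨d, ?_⟩
  rintro _ ⟨rs, rfl, -, hrs⟩
  have := he ▸ hrs.length_le_ringKrullDim
  exact_mod_cast this

lemma not_depthGE_rdepth_succ : ¬ DepthGE R R (rdepth R R + 1) := fun h => by
  obtain ⟨rs, hlen, hrs, hreg⟩ := h.exists_isRegular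
  exact Nat.not_succ_le_self _ (le_csSup bddAbove_length_isRegular_self ⟨rs, hlen, hrs, hreg⟩)

end DepthLeDim

lemma LinearMap.mem_ideal_smul_top_of_apply_one_mem {R : Type u} [CommRing R] {ι : Type*}
    [Fintype ι] [DecidableEq ι] {I : Ideal R} {φ : R →ₗ[R] (ι → R)} (h : ∀ j, φ 1 j ∈ I) :
    φ ∈ I • (⊤ : Submodule R (R →ₗ[R] (ι → R))) := by
  have hφ : φ = ∑ j, φ 1 j • LinearMap.toSpanSingleton R _ (Pi.single j 1) := by
    ext j : 2
    simp [Finset.sum_apply, Pi.single_apply]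
  rw [hφ]
  exact Submodule.sum_mem _ fun j _ => Submodule.smul_mem_smul (h j) trivial

lemma apply_mem_maximalIdeal_of_not_hasFreeSummand {R : Type u} [CommRing R] [IsLocalRing R]
    {M : Type u} [AddCommGroup M] [Module R M] (hM : ¬ HasFreeSummand R M) (p : M →ₗ[R] R)
    (x : M) : p x ∈ maximalIdeal R := by
  refine (mem_maximalIdeal _).mpr fun hu => hM ⟨(hu.unit⁻¹ : Rˣ) • p, .toSpanSingleton R M x, ?_⟩
  ext
  simp [Units.smul_def]

open Abelian in
lemma subsingleton_ext_of_not_hasFreeSummand {R : Type u} [CommRing R] [IsLocalRing R]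
    {M : Type u} [AddCommGroup M] [Module R M] (hM : ¬ HasFreeSummand R M) {n m t : ℕ}
    {f : R →ₗ[R] (Fin n → M)} (hf : Function.Injective f)
    (hX : DepthGE R ((Fin n → M) ⧸ LinearMap.range f) t)
    {g : M →ₗ[R] (Fin m → R)} (hg : Function.Injective g)
    (hY : DepthGE R ((Fin m → R) ⧸ LinearMap.range g) t) :
    Subsingleton (Ext (ModuleCat.of R (R ⧸ maximalIdeal R)) (ModuleCat.of R R) t) := by
  refine subsingleton_of_forall_eq 0 fun x => by_contra fun hx => ?_
  have hfx : x.comp (Ext.mk₀ (ModuleCat.ofHom f)) (add_zero t) ≠ 0 := by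
    simpa using (Ext.postcomp_mk₀_injective_of_injective hf hX).ne hx
  obtain ⟨i, hi⟩ := Ext.exists_comp_mk₀_proj_ne_zero hfx
  have hzero : x.comp (Ext.mk₀ (ModuleCat.ofHom (g ∘ₗ LinearMap.proj i ∘ₗ f))) (add_zero t) = 0 :=
    Ext.comp_mk₀_eq_zero_of_mem_smul_top (Ideal.annihilator_quotient (I := maximalIdeal R)).ge
      (LinearMap.mem_ideal_smul_top_of_apply_one_mem fun j =>
        apply_mem_maximalIdeal_of_not_hasFreeSummand hM (LinearMap.proj j ∘ₗ g) _) x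
  refine hi (Ext.postcomp_mk₀_injective_of_injective hg hY ?_)
  rw [map_zero, ← hzero]
  simp only [AddMonoidHom.flip_apply, Ext.bilinearComp_apply_apply,
    Ext.comp_assoc_of_third_deg_zero, Ext.mk₀_comp_mk₀, ModuleCat.ofHom_comp, Category.assoc]

theorem stmt_4_general (R : Type u) [CommRing R] [IsNoetherianRing R] [IsLocalRing R]
    (M : Type u) [AddCommGroup M] [Module R M]
    (h1 : OmegaDeep R M) (h2 : DF R M) :
    HasFreeSummand R M := by
  obtain ⟨m, g, hg, hYfin, hY⟩ := h1
  obtain ⟨n, f, hf, hXfin, hX⟩ := h2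
  by_contra hM
  refine not_depthGE_rdepth_succ (R := R) fun i hi => ?_
  rcases (Nat.lt_succ_iff.mp hi).lt_or_eq with hi | rfl
  · exact depthGE_of_le_rdepth le_rfl i hi
  · exact subsingleton_ext_of_not_hasFreeSummand hM hf (depthGE_of_le_rdepth hX) hg
      (depthGE_of_le_rdepth hY)

/-- If a finitely generated module `M` over a Noetherian local ring lies in
`ΩDeep(R) ∩ DF(R)`, then `M` has a free direct summand. -/
theorem stmt_4 (R : Type u) [CommRing R] [IsNoetherianRing R] [IsLocalRing R]
    (M : Type u) [AddCommGroup M] [Module R M] [Module.Finite R M]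
    (h1 : OmegaDeep R M) (h2 : DF R M) :
    HasFreeSummand R M :=
  stmt_4_general R M h1 h2
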